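/- Let r ≥ 3, d ≥ 3 and m ≥ d + 2, and set a = m − d − 1 and b = ⌈d/2⌉. Let T'' be the r-uniform supertree obtained from the loose path P_d^r by attaching a pendant edges at the joint vertex v_b and one pendant edge at the joint vertex v_{b+1} (each pendant edge consists of the attachment vertex together with r − 1 new vertices). Then φ(T'', x) = x^{(a+1)(r−1)}·φ(P_d^r, x) − x^{(a+2)(r−1)−2}·φ(P_{b−1}^r, x)·φ(P_{d−b−1}^r, x) − a·x^{(a+1)(r−1)−2}·φ(P_{b−2}^r, x)·φ(P_{d−b+1}^r, x). -/

import Mathlib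

open Classical

noncomputable section

/-- A finite hypergraph: a finite vertex set together with a finite set of edges,
each edge being a finite set of vertices. -/
structure FinHypergraph (α : Type*) where
  verts : Finset α
  edges : Finset (Finset α)

namespace FinHypergraph

variable {α : Type*}

/-- Every edge of `H` is a subset of the vertex set of `H`. -/
def WellFormed (H : FinHypergraph α) : Prop := ∀ e ∈ H.edges, e ⊆ H.verts

/-- `H` is `r`-uniform: every edge has exactly `r` vertices. -/
def Uniform (H : FinHypergraph α) (r : ℕ) : Prop := ∀ e ∈ H.edges, e.card = r

/-- A set of edges is a matching if its members are pairwise disjoint. -/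
def IsMatchingSet (M : Finset (Finset α)) : Prop :=
  ∀ e ∈ M, ∀ f ∈ M, e ≠ f → Disjoint e f

/-- `m(H,k)`: the number of matchings of `H` consisting of exactly `k` edges. -/
noncomputable def matchCount (H : FinHypergraph α) (k : ℕ) : ℕ :=
  (H.edges.powerset.filter (fun M => M.card = k ∧ IsMatchingSet M)).card

/-- The matching polynomial `φ(H,x) = Σ_k (-1)^k m(H,k) x^(n - r·k)` of an
`r`-uniform hypergraph `H` with `n` vertices, evaluated at a real number `x`. -/
noncomputable def matchPoly (H : FinHypergraph α) (r : ℕ) (x : ℝ) : ℝ :=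
  ∑ k ∈ Finset.range (H.verts.card + 1),
    (-1 : ℝ) ^ k * (H.matchCount k : ℝ) * x ^ (H.verts.card - r * k)

/-- `H − S`: delete the vertices of `S` and all edges meeting `S`. -/
def removeVerts (H : FinHypergraph α) (S : Finset α) : FinHypergraph α :=
  ⟨H.verts \ S, H.edges.filter (fun e => Disjoint e S)⟩

/-- The edges of the `r`-uniform loose path of length `p` along the vertex labelling `w`:
the `i`-th edge consists of the `r` vertices `w (i*(r-1)), …, w ((i+1)*(r-1))`, so that
consecutive edges share exactly one vertex. -/
def loosePathEdges (r p : ℕ) (w : ℕ → α) : Finset (Finset α) :=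
  (Finset.range p).image (fun i => (Finset.Icc (i * (r - 1)) ((i + 1) * (r - 1))).image w)

/-- `P` is an `r`-uniform loose path with `m` edges (`P_m^r`); for `m = 0` it is a single
vertex with no edge. -/
def IsLoosePath (r m : ℕ) (P : FinHypergraph α) : Prop :=
  ∃ w : ℕ → α, Set.InjOn w (Set.Iic (m * (r - 1))) ∧
    P.verts = (Finset.Icc 0 (m * (r - 1))).image w ∧
    P.edges = loosePathEdges r m w

/-- The `r`-uniform loose path with `m` edges realized along the vertex labelling `w`. -/
def pathHypergraph (r m : ℕ) (w : ℕ → α) : FinHypergraph α :=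
  ⟨(Finset.Icc 0 (m * (r - 1))).image w, loosePathEdges r m w⟩

/-- `T` is obtained from `H` by attaching `k` pendant edges at the vertex `u`: each new
edge consists of `u` together with `r - 1` new vertices, the new vertices of distinct new
edges being distinct. -/
def IsPendantEdgesAttach (r k : ℕ) (H : FinHypergraph α) (u : α) (T : FinHypergraph α) : Prop :=
  u ∈ H.verts ∧ ∃ F : Fin k → Finset α,
    (∀ i, (F i).card = r - 1) ∧
    (∀ i, Disjoint (F i) H.verts) ∧
    (∀ i j, i ≠ j → Disjoint (F i) (F j)) ∧
    T.verts = H.verts ∪ Finset.univ.biUnion F ∧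
    T.edges = H.edges ∪ Finset.univ.image (fun i => insert u (F i))

end FinHypergraph

open FinHypergraph

/-!
Deleting an edge `e` of an `r`-uniform hypergraph gives `φ(H) = φ(H \ e) - φ(H - V(e))`; for a
pendant edge at `u` this reads `φ(H + e) = x^(r-1) φ(H) - φ(H - u)`, and by induction `a` pendant
edges at `u` contribute `x^(a(r-1)) φ(H) - a x^((a-1)(r-1)) φ(H - u)`. Peeling off the pendant edge
at `v_{b+1}` and then the `a` pendant edges at `v_b` expresses `φ(T'')` through `φ` of `P_d`,
`P_d - v_b`, `P_d - v_{b+1}` and `P_d - v_b - v_{b+1}`. Deleting consecutive joint vertices of a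
loose path leaves two shorter loose paths and isolated core vertices; as `φ` is multiplicative over
disjoint unions and invariant under injective relabelling, these are products of path
polynomials. Finally `φ(P_{k+2}) = x^(r-1) φ(P_{k+1}) - x^(r-2) φ(P_k)` rewrites `φ(P_{d-b+1})`.
-/

lemma Finset.disjoint_image_iff_of_injOn {α β : Type*} [DecidableEq α] [DecidableEq β]
    {f : α → β} {s t : Finset α} (hf : Set.InjOn f (↑s ∪ ↑t)) :
    Disjoint (s.image f) (t.image f) ↔ Disjoint s t := by
  rw [Finset.disjoint_iff_inter_eq_empty, Finset.disjoint_iff_inter_eq_empty,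
    ← Finset.image_inter_of_injOn s t hf, Finset.image_eq_empty]

namespace FinHypergraph

variable {α β : Type*} {r : ℕ}

lemma ext {H K : FinHypergraph α} (hv : H.verts = K.verts) (he : H.edges = K.edges) :
    H = K := by
  cases H; cases K; congr

def matchings (H : FinHypergraph α) : Finset (Finset (Finset α)) :=
  H.edges.powerset.filter IsMatchingSet

lemma mem_matchings {H : FinHypergraph α} {M : Finset (Finset α)} :
    M ∈ H.matchings ↔ M ⊆ H.edges ∧ IsMatchingSet M := by
  simp [matchings]

lemma IsMatchingSet.mono {M N : Finset (Finset α)} (h : IsMatchingSet N) (hMN : M ⊆ N) :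
    IsMatchingSet M :=
  fun e he f hf hef => h e (hMN he) f (hMN hf) hef

lemma removeVerts_wellFormed {H : FinHypergraph α} (hwf : H.WellFormed) (S : Finset α) :
    (H.removeVerts S).WellFormed := by
  intro e he
  obtain ⟨heH, heS⟩ := Finset.mem_filter.1 he
  exact Finset.subset_sdiff.2 ⟨hwf e heH, heS⟩

lemma removeVerts_uniform {H : FinHypergraph α} (hu : H.Uniform r) (S : Finset α) :
    (H.removeVerts S).Uniform r :=
  fun e he => hu e (Finset.mem_filter.1 he).1

lemma removeVerts_verts_subset (H : FinHypergraph α) (S : Finset α) :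
    (H.removeVerts S).verts ⊆ H.verts :=
  Finset.sdiff_subset

lemma removeVerts_removeVerts (H : FinHypergraph α) (S S' : Finset α) :
    (H.removeVerts S).removeVerts S' = H.removeVerts (S ∪ S') := by
  refine ext sdiff_sdiff_left ?_
  simp only [removeVerts, Finset.filter_filter, Finset.disjoint_union_right]

lemma mul_card_le_of_mem_matchings {H : FinHypergraph α} (hwf : H.WellFormed)
    (hu : H.Uniform r) {M : Finset (Finset α)} (hM : M ∈ H.matchings) :
    r * M.card ≤ H.verts.card := by
  obtain ⟨hME, hMm⟩ := mem_matchings.1 hM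
  calc r * M.card = (M.biUnion id).card := by
        rw [Finset.card_biUnion (t := id) fun e he f hf hef => hMm e he f hf hef,
          Finset.sum_congr rfl fun e he => (hu e (hME he) : (id e).card = r), Finset.sum_const,
          smul_eq_mul, mul_comm]
    _ ≤ H.verts.card :=
        Finset.card_le_card (Finset.biUnion_subset.2 fun e he => hwf e (hME he))

lemma matchPoly_eq_sum_matchings (hr : 1 ≤ r) {H : FinHypergraph α} (hwf : H.WellFormed)
    (hu : H.Uniform r) (x : ℝ) :
    H.matchPoly r x
      = ∑ M ∈ H.matchings, (-1 : ℝ) ^ M.card * x ^ (H.verts.card - r * M.card) := by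
  have hmaps : ∀ M ∈ H.matchings, M.card ∈ Finset.range (H.verts.card + 1) := fun M hM =>
    Finset.mem_range_succ_iff.2
      ((Nat.le_mul_of_pos_left _ hr).trans (mul_card_le_of_mem_matchings hwf hu hM))
  rw [matchPoly, ← Finset.sum_fiberwise_of_maps_to hmaps]
  refine Finset.sum_congr rfl fun k _ => ?_
  rw [Finset.sum_congr rfl fun M hM => by rw [(Finset.mem_filter.1 hM).2],
    Finset.sum_const, nsmul_eq_mul, matchCount, matchings, Finset.filter_filter]
  simp only [and_comm]
  ring

lemma matchPoly_of_edges_eq_empty {H : FinHypergraph α} (he : H.edges = ∅) (x : ℝ) :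
    H.matchPoly r x = x ^ H.verts.card := by
  have hcount : ∀ k, H.matchCount k = if k = 0 then 1 else 0 := fun k => by
    rcases k with _ | k <;> simp [matchCount, he, IsMatchingSet, Finset.filter_singleton]
  rw [matchPoly, Finset.sum_eq_single 0 (fun k _ hk => by simp [hcount, hk]) (by simp)]
  simp [hcount]

lemma IsMatchingSet.union {A B : FinHypergraph α} (hwA : A.WellFormed) (hwB : B.WellFormed)
    (hAB : Disjoint A.verts B.verts) {MA MB : Finset (Finset α)} (hMA : MA ∈ A.matchings)
    (hMB : MB ∈ B.matchings) : IsMatchingSet (MA ∪ MB) := by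
  obtain ⟨hAE, hAm⟩ := mem_matchings.1 hMA
  obtain ⟨hBE, hBm⟩ := mem_matchings.1 hMB
  have cross : ∀ e ∈ MA, ∀ f ∈ MB, Disjoint e f := fun e he f hf =>
    hAB.mono (hwA e (hAE he)) (hwB f (hBE hf))
  intro e he f hf hef
  rcases Finset.mem_union.1 he with he | he <;> rcases Finset.mem_union.1 hf with hf | hf
  exacts [hAm e he f hf hef, cross e he f hf, (cross f hf e he).symm, hBm e he f hf hef]

lemma wellFormed_of_eq_union {A B T : FinHypergraph α} (hwA : A.WellFormed)
    (hwB : B.WellFormed) (hv : T.verts = A.verts ∪ B.verts) (he : T.edges = A.edges ∪ B.edges) :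
    T.WellFormed := fun e he' => by
  rw [he] at he'
  rw [hv]
  rcases Finset.mem_union.1 he' with h | h
  exacts [(hwA e h).trans Finset.subset_union_left, (hwB e h).trans Finset.subset_union_right]

lemma uniform_of_eq_union {A B T : FinHypergraph α} (huA : A.Uniform r) (huB : B.Uniform r)
    (he : T.edges = A.edges ∪ B.edges) : T.Uniform r := fun e he' => by
  rw [he] at he'
  rcases Finset.mem_union.1 he' with h | h
  exacts [huA e h, huB e h]

lemma disjoint_edges_of_disjoint_verts (hr : 1 ≤ r) {A B : FinHypergraph α}
    (hwA : A.WellFormed) (hwB : B.WellFormed) (huA : A.Uniform r)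
    (hAB : Disjoint A.verts B.verts) : Disjoint A.edges B.edges :=
  Finset.disjoint_left.2 fun e heA heB => by
    have h0 : e = ∅ := Finset.subset_empty.1 fun v hv =>
      (Finset.disjoint_left.1 hAB (hwA e heA hv) (hwB e heB hv)).elim
    have := huA e heA
    simp [h0] at this
    omega

lemma matchPoly_eq_mul_of_disjoint (hr : 1 ≤ r) {A B T : FinHypergraph α}
    (hwA : A.WellFormed) (hwB : B.WellFormed) (huA : A.Uniform r) (huB : B.Uniform r)
    (hAB : Disjoint A.verts B.verts) (hv : T.verts = A.verts ∪ B.verts)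
    (he : T.edges = A.edges ∪ B.edges) (x : ℝ) :
    T.matchPoly r x = A.matchPoly r x * B.matchPoly r x := by
  have hwT := wellFormed_of_eq_union hwA hwB hv he
  have huT := uniform_of_eq_union huA huB he
  have hE := disjoint_edges_of_disjoint_verts hr hwA hwB huA hAB
  rw [matchPoly_eq_sum_matchings hr hwT huT, matchPoly_eq_sum_matchings hr hwA huA,
    matchPoly_eq_sum_matchings hr hwB huB, Finset.sum_mul_sum, ← Finset.sum_product']
  symm
  refine Finset.sum_nbij' (fun p => p.1 ∪ p.2) (fun M => (M ∩ A.edges, M ∩ B.edges))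
    ?_ ?_ ?_ ?_ ?_
  · rintro ⟨MA, MB⟩ hp
    obtain ⟨hMA, hMB⟩ := Finset.mem_product.1 hp
    refine mem_matchings.2 ⟨he ▸ Finset.union_subset_union (mem_matchings.1 hMA).1
      (mem_matchings.1 hMB).1, IsMatchingSet.union hwA hwB hAB hMA hMB⟩
  · intro M hM
    obtain ⟨hME, hMm⟩ := mem_matchings.1 hM
    exact Finset.mem_product.2
      ⟨mem_matchings.2 ⟨Finset.inter_subset_right, hMm.mono Finset.inter_subset_left⟩,
        mem_matchings.2 ⟨Finset.inter_subset_right, hMm.mono Finset.inter_subset_left⟩⟩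
  · rintro ⟨MA, MB⟩ hp
    obtain ⟨hMA, hMB⟩ : MA ∈ A.matchings ∧ MB ∈ B.matchings := Finset.mem_product.1 hp
    have hA := (mem_matchings.1 hMA).1
    have hB := (mem_matchings.1 hMB).1
    rw [Finset.union_inter_distrib_right, Finset.union_inter_distrib_right,
      Finset.inter_eq_left.2 hA, Finset.inter_eq_left.2 hB,
      Finset.disjoint_iff_inter_eq_empty.1 (hE.mono_left hA),
      Finset.disjoint_iff_inter_eq_empty.1 (hE.symm.mono_left hB), Finset.union_empty,
      Finset.empty_union]
  · intro M hM
    rw [← Finset.inter_union_distrib_left, ← he, Finset.inter_eq_left.2 (mem_matchings.1 hM).1]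
  · rintro ⟨MA, MB⟩ hp
    obtain ⟨hMA, hMB⟩ : MA ∈ A.matchings ∧ MB ∈ B.matchings := Finset.mem_product.1 hp
    have hbA := mul_card_le_of_mem_matchings hwA huA hMA
    have hbB := mul_card_le_of_mem_matchings hwB huB hMB
    rw [Finset.card_union_of_disjoint
        (hE.mono (mem_matchings.1 hMA).1 (mem_matchings.1 hMB).1),
      hv, Finset.card_union_of_disjoint hAB, Nat.mul_add,
      show A.verts.card + B.verts.card - (r * MA.card + r * MB.card)
        = (A.verts.card - r * MA.card) + (B.verts.card - r * MB.card) by omega]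
    ring

lemma matchPoly_add_isolated (hr : 1 ≤ r) {H T : FinHypergraph α} (hwf : H.WellFormed)
    (hu : H.Uniform r) {I : Finset α} (hI : Disjoint H.verts I) (hv : T.verts = H.verts ∪ I)
    (he : T.edges = H.edges) (x : ℝ) :
    T.matchPoly r x = x ^ I.card * H.matchPoly r x := by
  rw [matchPoly_eq_mul_of_disjoint (B := ⟨I, ∅⟩) hr hwf (by simp [WellFormed])
      hu (by simp [Uniform]) hI hv (by simp [he]),
    matchPoly_of_edges_eq_empty (H := ⟨I, ∅⟩) rfl, mul_comm]

lemma sum_matchings_filter_mem (hr : 1 ≤ r) {H : FinHypergraph α} (hwf : H.WellFormed)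
    (hu : H.Uniform r) {e : Finset α} (he : e ∈ H.edges) (x : ℝ) :
    ∑ M ∈ H.matchings.filter (e ∈ ·), (-1 : ℝ) ^ M.card * x ^ (H.verts.card - r * M.card)
      = -∑ M ∈ (H.removeVerts e).matchings,
          (-1 : ℝ) ^ M.card * x ^ ((H.removeVerts e).verts.card - r * M.card) := by
  have he_ne : ¬ Disjoint e e := fun h => by
    have := hu e he
    simp [disjoint_self.1 h] at this
    omega
  have hcard : (H.removeVerts e).verts.card = H.verts.card - r := by
    rw [removeVerts, Finset.card_sdiff_of_subset (hwf e he), hu e he]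
  rw [← Finset.sum_neg_distrib]
  refine Finset.sum_nbij' (·.erase e) (insert e) ?_ ?_ ?_ ?_ ?_
  · intro M hM
    obtain ⟨hM, heM⟩ := Finset.mem_filter.1 hM
    obtain ⟨hME, hMm⟩ := mem_matchings.1 hM
    refine mem_matchings.2 ⟨fun f hf => ?_, hMm.mono (Finset.erase_subset e M)⟩
    obtain ⟨hfe, hfM⟩ := Finset.mem_erase.1 hf
    exact Finset.mem_filter.2 ⟨hME hfM, hMm f hfM e heM hfe⟩
  · intro M hM
    obtain ⟨hME, hMm⟩ := mem_matchings.1 hM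
    have hdisj : ∀ f ∈ M, Disjoint f e := fun f hf => (Finset.mem_filter.1 (hME hf)).2
    refine Finset.mem_filter.2 ⟨mem_matchings.2 ⟨Finset.insert_subset he
      fun f hf => (Finset.mem_filter.1 (hME hf)).1, ?_⟩, Finset.mem_insert_self e M⟩
    intro f hf g hg hfg
    rcases Finset.mem_insert.1 hf with hfe | hfM <;>
      rcases Finset.mem_insert.1 hg with hge | hgM
    · exact absurd (hfe.trans hge.symm) hfg
    · exact hfe ▸ (hdisj g hgM).symm
    · exact hge ▸ hdisj f hfM
    · exact hMm f hfM g hgM hfg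
  · intro M hM
    exact Finset.insert_erase (Finset.mem_filter.1 hM).2
  · intro M hM
    exact Finset.erase_insert fun heM =>
      he_ne (Finset.mem_filter.1 ((mem_matchings.1 hM).1 heM)).2
  · intro M hM
    have hk := Finset.card_erase_add_one (Finset.mem_filter.1 hM).2
    rw [hcard, ← hk, Nat.mul_succ, pow_succ,
      show H.verts.card - (r * (M.erase e).card + r)
        = H.verts.card - r - r * (M.erase e).card by omega]
    ring

lemma matchPoly_eq_sub_removeVerts (hr : 1 ≤ r) {H : FinHypergraph α} (hwf : H.WellFormed)
    (hu : H.Uniform r) {e : Finset α} (he : e ∈ H.edges) (x : ℝ) :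
    H.matchPoly r x
      = matchPoly ⟨H.verts, H.edges.erase e⟩ r x - (H.removeVerts e).matchPoly r x := by
  have hwf' : (⟨H.verts, H.edges.erase e⟩ : FinHypergraph α).WellFormed :=
    fun f hf => hwf f (Finset.mem_of_mem_erase hf)
  have hu' : (⟨H.verts, H.edges.erase e⟩ : FinHypergraph α).Uniform r :=
    fun f hf => hu f (Finset.mem_of_mem_erase hf)
  have hwithout : H.matchings.filter (e ∉ ·) = matchings ⟨H.verts, H.edges.erase e⟩ := by
    ext M
    simp only [Finset.mem_filter, mem_matchings, Finset.subset_erase]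
    tauto
  rw [matchPoly_eq_sum_matchings hr hwf hu, matchPoly_eq_sum_matchings hr hwf' hu',
    matchPoly_eq_sum_matchings hr (removeVerts_wellFormed hwf e) (removeVerts_uniform hu e),
    ← Finset.sum_filter_add_sum_filter_not H.matchings (e ∈ ·),
    sum_matchings_filter_mem hr hwf hu he, hwithout]
  ring

lemma removeVerts_insert_of_pendant {H T : FinHypergraph α} (hwf : H.WellFormed) {u : α}
    {S : Finset α} (hSV : Disjoint S H.verts) (hv : T.verts = H.verts ∪ S)
    (he : T.edges = insert (insert u S) H.edges) :
    T.removeVerts (insert u S) = H.removeVerts {u} := by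
  refine ext ?_ ?_
  · ext v
    simp only [removeVerts, hv, Finset.mem_sdiff, Finset.mem_union, Finset.mem_insert,
      Finset.mem_singleton]
    have : v ∈ S → v ∉ H.verts := fun h => Finset.disjoint_left.1 hSV h
    tauto
  · simp only [removeVerts, he]
    rw [Finset.filter_insert, if_neg (by simp)]
    refine Finset.filter_congr fun e he' => ?_
    rw [Finset.insert_eq, Finset.disjoint_union_right,
      and_iff_left (hSV.mono_right (hwf e he')).symm]

lemma matchPoly_add_pendant (hr : 2 ≤ r) {H T : FinHypergraph α} (hwf : H.WellFormed)
    (hu : H.Uniform r) {u : α} (huV : u ∈ H.verts) {S : Finset α} (hS : S.card = r - 1)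
    (hSV : Disjoint S H.verts) (hv : T.verts = H.verts ∪ S)
    (he : T.edges = insert (insert u S) H.edges) (x : ℝ) :
    T.matchPoly r x = x ^ (r - 1) * H.matchPoly r x - (H.removeVerts {u}).matchPoly r x := by
  have huS : u ∉ S := fun h => Finset.disjoint_left.1 hSV h huV
  have he_new : insert u S ∉ H.edges := fun h => by
    obtain ⟨s, hs⟩ := Finset.card_pos.1 (by omega : 0 < S.card)
    exact Finset.disjoint_left.1 hSV hs (hwf _ h (Finset.mem_insert_of_mem hs))
  have hwT : T.WellFormed := by
    intro e he'
    rw [he] at he'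
    rw [hv]
    rcases Finset.mem_insert.1 he' with rfl | he'
    · exact Finset.insert_subset (Finset.mem_union_left S huV) Finset.subset_union_right
    · exact (hwf e he').trans Finset.subset_union_left
  have huT : T.Uniform r := by
    intro e he'
    rw [he] at he'
    rcases Finset.mem_insert.1 he' with rfl | he'
    · rw [Finset.card_insert_of_notMem huS, hS]; omega
    · exact hu e he'
  rw [matchPoly_eq_sub_removeVerts (by omega) hwT huT (he ▸ Finset.mem_insert_self _ _),
    removeVerts_insert_of_pendant hwf hSV hv he,
    matchPoly_add_isolated (T := ⟨T.verts, T.edges.erase (insert u S)⟩) (by omega) hwf hu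
      hSV.symm hv (by rw [he, Finset.erase_insert he_new]), hS]

def attachPendants {ι : Type*} (H : FinHypergraph α) (u : α) (F : ι → Finset α)
    (s : Finset ι) : FinHypergraph α :=
  ⟨H.verts ∪ s.biUnion F, H.edges ∪ s.image fun i => insert u (F i)⟩

section attachPendants

variable {ι : Type*} {H : FinHypergraph α} {u : α} {F : ι → Finset α}

lemma attachPendants_wellFormed (hwf : H.WellFormed) (huV : u ∈ H.verts) (s : Finset ι) :
    (attachPendants H u F s).WellFormed := by
  intro e he
  rcases Finset.mem_union.1 he with he | he
  · exact (hwf e he).trans Finset.subset_union_left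
  · obtain ⟨i, hi, rfl⟩ := Finset.mem_image.1 he
    exact Finset.insert_subset (Finset.mem_union_left _ huV)
      ((Finset.subset_biUnion_of_mem F hi).trans Finset.subset_union_right)

lemma attachPendants_uniform (hr : 1 ≤ r) (hu : H.Uniform r)
    (hF : ∀ i, (F i).card = r - 1) (huF : ∀ i, u ∉ F i) (s : Finset ι) :
    (attachPendants H u F s).Uniform r := by
  intro e he
  rcases Finset.mem_union.1 he with he | he
  · exact hu e he
  · obtain ⟨i, -, rfl⟩ := Finset.mem_image.1 he
    rw [Finset.card_insert_of_notMem (huF i), hF i]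
    omega

lemma attachPendants_insert [DecidableEq ι] {i : ι} {s : Finset ι} :
    attachPendants H u F (insert i s)
      = ⟨(attachPendants H u F s).verts ∪ F i,
          insert (insert u (F i)) (attachPendants H u F s).edges⟩ := by
  refine ext ?_ ?_
  · simp only [attachPendants, Finset.biUnion_insert]
    ac_rfl
  · simp only [attachPendants, Finset.image_insert, Finset.union_insert]

lemma matchPoly_attachPendants_removeVerts (hr : 1 ≤ r) (hwf : H.WellFormed)
    (hu : H.Uniform r) (huV : u ∈ H.verts) (hF : ∀ i, (F i).card = r - 1)
    (hFV : ∀ i, Disjoint (F i) H.verts) (hFF : Pairwise fun i j => Disjoint (F i) (F j))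
    (s : Finset ι) (x : ℝ) :
    ((attachPendants H u F s).removeVerts {u}).matchPoly r x
      = x ^ (s.card * (r - 1)) * (H.removeVerts {u}).matchPoly r x := by
  have hdisj : Disjoint (H.removeVerts {u}).verts (s.biUnion F) :=
    (Finset.disjoint_biUnion_right _ _ _).2 fun i _ => ((hFV i).mono_right Finset.sdiff_subset).symm
  have hcard : (s.biUnion F).card = s.card * (r - 1) := by
    rw [Finset.card_biUnion fun i _ j _ hij => hFF hij, Finset.sum_congr rfl fun i _ => hF i,
      Finset.sum_const, smul_eq_mul]
  rw [matchPoly_add_isolated hr (removeVerts_wellFormed hwf _) (removeVerts_uniform hu _) hdisj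
    ?_ ?_, hcard]
  · simp only [attachPendants, removeVerts]
    rw [Finset.union_sdiff_distrib, Finset.sdiff_eq_self_of_disjoint
      ((Finset.disjoint_biUnion_left _ _ _).2 fun i _ =>
        Finset.disjoint_singleton_right.2 fun h => Finset.disjoint_left.1 (hFV i) h huV)]
  · simp only [attachPendants, removeVerts]
    rw [Finset.filter_union, Finset.filter_false_of_mem (s := s.image _) (by simp),
      Finset.union_empty]

lemma matchPoly_attachPendants (hr : 2 ≤ r) (hwf : H.WellFormed) (hu : H.Uniform r)
    (huV : u ∈ H.verts) (hF : ∀ i, (F i).card = r - 1) (hFV : ∀ i, Disjoint (F i) H.verts)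
    (hFF : Pairwise fun i j => Disjoint (F i) (F j)) (s : Finset ι) (x : ℝ) :
    (attachPendants H u F s).matchPoly r x
      = x ^ (s.card * (r - 1)) * H.matchPoly r x
        - s.card * x ^ ((s.card - 1) * (r - 1)) * (H.removeVerts {u}).matchPoly r x := by
  classical
  induction s using Finset.induction_on with
  | empty =>
    simp [attachPendants]
  | insert i s hi ih =>
    have hFi : Disjoint (F i) (attachPendants H u F s).verts :=
      Finset.disjoint_union_right.2 ⟨hFV i, (Finset.disjoint_biUnion_right _ _ _).2
        fun j hj => hFF fun h => hi (h ▸ hj)⟩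
    rw [matchPoly_add_pendant hr (attachPendants_wellFormed hwf huV s)
      (attachPendants_uniform (by omega) hu hF
        (fun j h => Finset.disjoint_left.1 (hFV j) h huV) s)
      (Finset.mem_union_left _ huV) (hF i) hFi (by rw [attachPendants_insert])
      (by rw [attachPendants_insert]), ih,
      matchPoly_attachPendants_removeVerts (by omega) hwf hu huV hF hFV hFF,
      Finset.card_insert_of_notMem hi, Nat.add_sub_cancel]
    rcases s.card with _ | n
    · simp only [zero_mul, pow_zero, CharP.cast_eq_zero, zero_add, one_mul]
      ring
    · rw [Nat.add_sub_cancel]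
      push_cast
      ring

end attachPendants

namespace IsPendantEdgesAttach

variable {k : ℕ} {H T : FinHypergraph α} {u : α}

lemma wellFormed (h : IsPendantEdgesAttach r k H u T) (hwf : H.WellFormed) : T.WellFormed := by
  obtain ⟨huV, F, -, -, -, hv, he⟩ := h
  obtain rfl : T = attachPendants H u F Finset.univ := ext hv he
  exact attachPendants_wellFormed hwf huV _

lemma uniform (hr : 1 ≤ r) (h : IsPendantEdgesAttach r k H u T) (hu : H.Uniform r) :
    T.Uniform r := by
  obtain ⟨huV, F, hF, hFV, -, hv, he⟩ := h
  obtain rfl : T = attachPendants H u F Finset.univ := ext hv he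
  exact attachPendants_uniform hr hu hF (fun i h => Finset.disjoint_left.1 (hFV i) h huV) _

lemma matchPoly_eq (hr : 2 ≤ r) (h : IsPendantEdgesAttach r k H u T) (hwf : H.WellFormed)
    (hu : H.Uniform r) (x : ℝ) :
    T.matchPoly r x
      = x ^ (k * (r - 1)) * H.matchPoly r x
        - k * x ^ ((k - 1) * (r - 1)) * (H.removeVerts {u}).matchPoly r x := by
  obtain ⟨huV, F, hF, hFV, hFF, hv, he⟩ := h
  obtain rfl : T = attachPendants H u F Finset.univ := ext hv he
  rw [matchPoly_attachPendants hr hwf hu huV hF hFV hFF, Finset.card_univ, Fintype.card_fin]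

lemma removeVerts (h : IsPendantEdgesAttach r k H u T) {S : Finset α} (hS : S ⊆ H.verts)
    (huS : u ∉ S) : IsPendantEdgesAttach r k (H.removeVerts S) u (T.removeVerts S) := by
  obtain ⟨huV, F, hF, hFV, hFF, hv, he⟩ := h
  have hFS : ∀ i, Disjoint (F i) S := fun i => (hFV i).mono_right hS
  refine ⟨Finset.mem_sdiff.2 ⟨huV, huS⟩, F, hF,
    fun i => (hFV i).mono_right Finset.sdiff_subset, hFF, ?_, ?_⟩
  · rw [FinHypergraph.removeVerts, FinHypergraph.removeVerts, hv, Finset.union_sdiff_distrib,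
      Finset.sdiff_eq_self_of_disjoint ((Finset.disjoint_biUnion_left _ _ _).2 fun i _ => hFS i)]
  · rw [FinHypergraph.removeVerts, FinHypergraph.removeVerts, he, Finset.filter_union,
      Finset.filter_true_of_mem (s := Finset.univ.image _) ?_]
    simp only [Finset.mem_image, Finset.mem_univ, true_and, forall_exists_index,
      forall_apply_eq_imp_iff, Finset.disjoint_insert_left]
    exact fun i => ⟨huS, hFS i⟩

end IsPendantEdgesAttach

lemma matchPoly_eq_of_pendants_at_two_vertices (hr : 2 ≤ r) {k : ℕ}
    {H T₁ T : FinHypergraph α} {u u' : α} (hwf : H.WellFormed) (hu : H.Uniform r)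
    (hu'V : u' ∈ H.verts) (hne : u ≠ u')
    (h₁ : IsPendantEdgesAttach r k H u T₁) (h : IsPendantEdgesAttach r 1 T₁ u' T) (x : ℝ) :
    T.matchPoly r x
      = x ^ ((k + 1) * (r - 1)) * H.matchPoly r x
        - k * x ^ (k * (r - 1)) * (H.removeVerts {u}).matchPoly r x
        - x ^ (k * (r - 1)) * (H.removeVerts {u'}).matchPoly r x
        + k * x ^ ((k - 1) * (r - 1)) * (H.removeVerts {u, u'}).matchPoly r x := by
  have h₁' := h₁.removeVerts (Finset.singleton_subset_iff.2 hu'V) (by simpa using hne)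
  rw [h.matchPoly_eq hr (h₁.wellFormed hwf) (h₁.uniform (by omega) hu),
    h₁.matchPoly_eq hr hwf hu,
    h₁'.matchPoly_eq hr (removeVerts_wellFormed hwf _) (removeVerts_uniform hu _),
    removeVerts_removeVerts, Finset.union_comm, ← Finset.insert_eq]
  rcases k with _ | k
  · simp
  · rw [Nat.add_sub_cancel]
    push_cast
    ring

def map (f : α → β) (H : FinHypergraph α) : FinHypergraph β :=
  ⟨H.verts.image f, H.edges.image (Finset.image f)⟩

section map

variable {f : α → β} {H : FinHypergraph α}

lemma matchCount_map (hwf : H.WellFormed) (hf : Set.InjOn f H.verts) (k : ℕ) :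
    (H.map f).matchCount k = H.matchCount k := by
  have hE : Set.InjOn (Finset.image f) H.edges :=
    (Finset.image_injOn_powerset_of_injOn hf).mono fun e he => Finset.mem_powerset.2 (hwf e he)
  have hdisj : ∀ e ∈ H.edges, ∀ e' ∈ H.edges,
      (Disjoint (e.image f) (e'.image f) ↔ Disjoint e e') := fun e he e' he' =>
    Finset.disjoint_image_iff_of_injOn (hf.mono (by simpa using ⟨hwf e he, hwf e' he'⟩))
  rw [matchCount, matchCount, map, Finset.powerset_image, Finset.filter_image,
    Finset.card_image_of_injOn ((Finset.image_injOn_powerset_of_injOn hE).mono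
      (Finset.filter_subset _ _))]
  refine congrArg Finset.card (Finset.filter_congr fun M hM => ?_)
  have hM := Finset.mem_powerset.1 hM
  rw [Finset.card_image_of_injOn (hE.mono hM)]
  refine and_congr_right fun _ => ?_
  simp only [IsMatchingSet, Finset.forall_mem_image]
  refine forall₂_congr fun e he => forall₂_congr fun e' he' => ?_
  rw [(hE.ne_iff (hM he) (hM he')), hdisj e (hM he) e' (hM he')]

lemma matchPoly_map (hwf : H.WellFormed) (hf : Set.InjOn f H.verts) (x : ℝ) :
    (H.map f).matchPoly r x = H.matchPoly r x := by
  have hcard : (H.map f).verts.card = H.verts.card := Finset.card_image_of_injOn hf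
  simp only [matchPoly, hcard, matchCount_map hwf hf]

lemma map_removeVerts (hwf : H.WellFormed) (hf : Set.InjOn f H.verts) {S : Finset α}
    (hS : S ⊆ H.verts) : (H.map f).removeVerts (S.image f) = (H.removeVerts S).map f := by
  refine ext (Finset.image_sdiff_of_injOn hf hS).symm ?_
  simp only [map, removeVerts, Finset.filter_image]
  refine congrArg _ (Finset.filter_congr fun e he => ?_)
  exact Finset.disjoint_image_iff_of_injOn (hf.mono (by simpa using ⟨hwf e he, hS⟩))

end map

section loosePath

lemma pathHypergraph_id_verts (r m : ℕ) :
    (pathHypergraph r m id).verts = Finset.Icc 0 (m * (r - 1)) := by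
  simp [pathHypergraph]

lemma loosePathEdges_id (r m : ℕ) :
    loosePathEdges r m id
      = (Finset.range m).image fun i => Finset.Icc (i * (r - 1)) ((i + 1) * (r - 1)) := by
  simp only [loosePathEdges, Finset.image_id]
  -- the definitions are elaborated with classical `DecidableEq` instances, not those of `ℕ`
  convert rfl

lemma pathHypergraph_eq_map (r m : ℕ) (w : ℕ → α) :
    pathHypergraph r m w = (pathHypergraph r m id).map w := by
  refine ext (by simp [map, pathHypergraph]) ?_
  simp only [map, pathHypergraph, loosePathEdges, Finset.image_image, Finset.image_id]
  congr

lemma pathHypergraph_wellFormed (r m : ℕ) (w : ℕ → α) :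
    (pathHypergraph r m w).WellFormed := by
  intro e he
  obtain ⟨i, hi, rfl⟩ := Finset.mem_image.1 he
  refine Finset.image_subset_image (Finset.Icc_subset_Icc (Nat.zero_le _) ?_)
  exact Nat.mul_le_mul_right _ (Finset.mem_range.1 hi)

lemma pathHypergraph_uniform (hr : 1 ≤ r) {m : ℕ} {w : ℕ → α}
    (hw : Set.InjOn w (Set.Iic (m * (r - 1)))) : (pathHypergraph r m w).Uniform r := by
  intro e he
  obtain ⟨i, hi, rfl⟩ := Finset.mem_image.1 he
  have hle : (i + 1) * (r - 1) ≤ m * (r - 1) :=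
    Nat.mul_le_mul_right _ (Finset.mem_range.1 hi)
  rw [Finset.card_image_of_injOn (hw.mono fun z hz => (Finset.mem_Icc.1 hz).2.trans hle),
    Nat.card_Icc, add_mul, one_mul]
  omega

lemma coe_pathHypergraph_id_verts_subset (r m : ℕ) :
    ↑(pathHypergraph r m id).verts ⊆ Set.Iic (m * (r - 1)) := by
  rw [pathHypergraph_id_verts, Finset.coe_Icc]
  exact Set.Icc_subset_Iic_self

lemma matchPoly_pathHypergraph {m : ℕ} {w : ℕ → α} (hw : Set.InjOn w (Set.Iic (m * (r - 1))))
    (x : ℝ) : (pathHypergraph r m w).matchPoly r x = (pathHypergraph r m id).matchPoly r x := by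
  rw [pathHypergraph_eq_map, matchPoly_map (pathHypergraph_wellFormed r m id)
    (hw.mono (coe_pathHypergraph_id_verts_subset r m))]

lemma IsLoosePath.matchPoly_eq {m : ℕ} {P : FinHypergraph α} (h : IsLoosePath r m P) (x : ℝ) :
    P.matchPoly r x = (pathHypergraph r m id).matchPoly r x := by
  obtain ⟨w, hw, hv, he⟩ := h
  obtain rfl : P = pathHypergraph r m w := ext hv he
  exact matchPoly_pathHypergraph hw x

lemma pathHypergraph_joint_mem {m j : ℕ} (hj : j ≤ m) (w : ℕ → α) :
    w (j * (r - 1)) ∈ (pathHypergraph r m w).verts :=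
  Finset.mem_image_of_mem w (Finset.mem_Icc.2 ⟨Nat.zero_le _, Nat.mul_le_mul_right _ hj⟩)

lemma pathHypergraph_joint_ne (hr : 2 ≤ r) {m : ℕ} {w : ℕ → α}
    (hw : Set.InjOn w (Set.Iic (m * (r - 1)))) {i j : ℕ} (hi : i ≤ m) (hj : j ≤ m)
    (hij : i ≠ j) : w (i * (r - 1)) ≠ w (j * (r - 1)) := fun h =>
  hij (Nat.eq_of_mul_eq_mul_right (by omega)
    (hw (Nat.mul_le_mul_right _ hi) (Nat.mul_le_mul_right _ hj) h))

lemma matchPoly_pathHypergraph_removeVerts_last (hr : 2 ≤ r) (k : ℕ) (x : ℝ) :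
    ((pathHypergraph r (k + 1) id).removeVerts {(k + 1) * (r - 1)}).matchPoly r x
      = x ^ (r - 2) * (pathHypergraph r k id).matchPoly r x := by
  have hq : (k + 1) * (r - 1) = k * (r - 1) + (r - 1) := by ring
  have hI : (Finset.Ioo (k * (r - 1)) ((k + 1) * (r - 1))).card = r - 2 := by
    rw [Nat.card_Ioo]; omega
  rw [matchPoly_add_isolated (I := Finset.Ioo (k * (r - 1)) ((k + 1) * (r - 1))) (by omega)
    (pathHypergraph_wellFormed r k id) (pathHypergraph_uniform (by omega) (Set.injOn_id _)),
    hI]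
  · rw [pathHypergraph_id_verts, Finset.disjoint_left]
    intro z hz hz'
    simp only [Finset.mem_Icc, Finset.mem_Ioo] at hz hz'
    omega
  · ext z
    simp only [removeVerts, pathHypergraph_id_verts, Finset.mem_sdiff, Finset.mem_union,
      Finset.mem_Icc, Finset.mem_Ioo, Finset.mem_singleton]
    omega
  · simp only [removeVerts, pathHypergraph, loosePathEdges_id, Finset.range_add_one,
      Finset.image_insert, Finset.filter_insert, Finset.disjoint_singleton_right,
      Finset.mem_Icc, le_refl, and_true, hq, Nat.le_add_right, not_true, if_false]
    refine Finset.filter_true_of_mem fun e he => ?_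
    obtain ⟨i, hi, rfl⟩ := Finset.mem_image.1 he
    have : (i + 1) * (r - 1) ≤ k * (r - 1) := Nat.mul_le_mul_right _ (Finset.mem_range.1 hi)
    simp only [Finset.mem_Icc, not_and, not_le]
    omega

lemma matchPoly_pathHypergraph_add_two (hr : 2 ≤ r) (k : ℕ) (x : ℝ) :
    (pathHypergraph r (k + 2) id).matchPoly r x
      = x ^ (r - 1) * (pathHypergraph r (k + 1) id).matchPoly r x
        - x ^ (r - 2) * (pathHypergraph r k id).matchPoly r x := by
  have hq : (k + 2) * (r - 1) = (k + 1) * (r - 1) + (r - 1) := by ring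
  set S := Finset.Ioc ((k + 1) * (r - 1)) ((k + 2) * (r - 1))
  have hS : S.card = r - 1 := by rw [Nat.card_Ioc]; omega
  have hSV : Disjoint S (pathHypergraph r (k + 1) id).verts := by
    rw [pathHypergraph_id_verts, Finset.disjoint_left]
    intro z hz hz'
    simp only [S, Finset.mem_Icc, Finset.mem_Ioc] at hz hz'
    omega
  rw [matchPoly_add_pendant (u := (k + 1) * (r - 1)) hr (pathHypergraph_wellFormed r (k + 1) id)
      (pathHypergraph_uniform (by omega) (Set.injOn_id _)) (by simp [pathHypergraph_id_verts])
      hS hSV ?_ ?_, matchPoly_pathHypergraph_removeVerts_last hr]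
  · ext z
    simp only [S, pathHypergraph_id_verts, Finset.mem_union, Finset.mem_Icc, Finset.mem_Ioc]
    omega
  · have hle : (k + 1) * (r - 1) ≤ (k + 2) * (r - 1) := by omega
    simp only [S, pathHypergraph, loosePathEdges_id, Finset.range_add_one (n := k + 1),
      Finset.image_insert, Finset.Ioc_insert_left, hle, Nat.add_assoc, Nat.reduceAdd]
    convert rfl

end loosePath

section joints

lemma disjoint_Icc_image_mul_iff {q : ℕ} (hq : 0 < q) {k : ℕ} (hk : 1 ≤ k) (i l : ℕ) :
    Disjoint (Finset.Icc (i * q) ((i + 1) * q)) ((Finset.Icc (l + 1) (l + k)).image (· * q))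
      ↔ i < l ∨ l + k < i := by
  simp only [Finset.disjoint_right, Finset.mem_image, Finset.mem_Icc, forall_exists_index,
    and_imp]
  constructor
  · intro h
    by_contra! hc
    exact h (max (l + 1) i) (le_max_left _ _) (max_le (by omega) hc.2) rfl
      ⟨Nat.mul_le_mul_right _ (le_max_right _ _),
        Nat.mul_le_mul_right _ (max_le (by omega) (Nat.le_succ i))⟩
  · rintro h _ j hj hj' rfl ⟨hij, hji⟩
    rw [Nat.mul_le_mul_right_iff hq] at hij hji
    omega

lemma image_mul_Icc_subset_Ioo {q : ℕ} (hq : 0 < q) (l k : ℕ) :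
    (Finset.Icc (l + 1) (l + k)).image (· * q) ⊆ Finset.Ioo (l * q) ((l + k + 1) * q) := by
  intro z hz
  obtain ⟨j, hj, rfl⟩ := Finset.mem_image.1 hz
  rw [Finset.mem_Icc] at hj
  exact Finset.mem_Ioo.2
    ⟨Nat.mul_lt_mul_of_pos_right (by omega) hq, Nat.mul_lt_mul_of_pos_right (by omega) hq⟩

lemma card_Ioo_sdiff_image_mul_Icc {q : ℕ} (hq : 0 < q) (l k : ℕ) :
    (Finset.Ioo (l * q) ((l + k + 1) * q) \ (Finset.Icc (l + 1) (l + k)).image (· * q)).card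
      = (k + 1) * (q - 1) := by
  have hlen : (l + k + 1) * q = l * q + (k + 1) * q := by ring
  have hsub : (k + 1) * (q - 1) + (k + 1) = (k + 1) * q := by
    rw [← Nat.mul_succ, Nat.succ_eq_add_one, Nat.sub_add_cancel hq]
  rw [Finset.card_sdiff_of_subset (image_mul_Icc_subset_Ioo hq l k), Nat.card_Ioo,
    Finset.card_image_of_injective _ (mul_left_injective₀ hq.ne'), Nat.card_Icc]
  omega

lemma mem_pathHypergraph_add_verts_iff (r n c z : ℕ) :
    z ∈ (pathHypergraph r n (· + c)).verts ↔ c ≤ z ∧ z ≤ n * (r - 1) + c := by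
  simp [pathHypergraph, Finset.image_add_right_Icc]

lemma mem_removeVerts_joints_verts_iff (hr : 2 ≤ r) {l k n z : ℕ} (hk : 1 ≤ k) :
    z ∈ ((pathHypergraph r (l + k + n + 1) id).removeVerts
        ((Finset.Icc (l + 1) (l + k)).image (· * (r - 1)))).verts
      ↔ (z ∈ (pathHypergraph r l id).verts
          ∨ z ∈ Finset.Ioo (l * (r - 1)) ((l + k + 1) * (r - 1))
            \ (Finset.Icc (l + 1) (l + k)).image (· * (r - 1)))
        ∨ z ∈ (pathHypergraph r n (· + (l + k + 1) * (r - 1))).verts := by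
  have hq : 0 < r - 1 := by omega
  have hJ := image_mul_Icc_subset_Ioo hq l k
  have hlt : l * (r - 1) < (l + k + 1) * (r - 1) := Nat.mul_lt_mul_of_pos_right (by omega) hq
  have hlen : n * (r - 1) + (l + k + 1) * (r - 1) = (l + k + n + 1) * (r - 1) := by ring
  simp only [removeVerts, pathHypergraph_id_verts, mem_pathHypergraph_add_verts_iff, hlen,
    Finset.mem_sdiff, Finset.mem_Icc, Finset.mem_Ioo]
  by_cases hz : z ∈ (Finset.Icc (l + 1) (l + k)).image (· * (r - 1))
  · have := Finset.mem_Ioo.1 (hJ hz)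
    simp only [hz, not_true, and_false, or_false, false_iff]
    omega
  · have : (l + k + 1) * (r - 1) ≤ (l + k + n + 1) * (r - 1) :=
      Nat.mul_le_mul_right _ (by omega)
    simp only [hz, not_false_eq_true, and_true]
    omega

lemma mem_removeVerts_joints_edges_iff (hr : 2 ≤ r) {l k n : ℕ} (hk : 1 ≤ k)
    {e : Finset ℕ} :
    e ∈ ((pathHypergraph r (l + k + n + 1) id).removeVerts
        ((Finset.Icc (l + 1) (l + k)).image (· * (r - 1)))).edges
      ↔ e ∈ (pathHypergraph r l id).edges
        ∨ e ∈ (pathHypergraph r n (· + (l + k + 1) * (r - 1))).edges := by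
  have hq : 0 < r - 1 := by omega
  have hshift : ∀ j, Finset.Icc (j * (r - 1) + (l + k + 1) * (r - 1))
      ((j + 1) * (r - 1) + (l + k + 1) * (r - 1))
      = Finset.Icc ((j + (l + k + 1)) * (r - 1)) ((j + (l + k + 1) + 1) * (r - 1)) := fun j => by
    congr 1 <;> ring
  simp only [removeVerts, pathHypergraph, loosePathEdges, Finset.image_id, Finset.mem_filter,
    Finset.mem_image, Finset.mem_range, Finset.image_add_right_Icc, hshift]
  constructor
  · rintro ⟨⟨i, hi, rfl⟩, hd⟩
    rcases (disjoint_Icc_image_mul_iff hq hk i l).1 hd with h | h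
    · exact Or.inl ⟨i, h, rfl⟩
    · refine Or.inr ⟨i - (l + k + 1), by omega, ?_⟩
      rw [Nat.sub_add_cancel (by omega)]
  · rintro (⟨i, hi, rfl⟩ | ⟨j, hj, rfl⟩)
    · exact ⟨⟨i, by omega, rfl⟩, (disjoint_Icc_image_mul_iff hq hk i l).2 (Or.inl hi)⟩
    · exact ⟨⟨j + (l + k + 1), by omega, rfl⟩,
        (disjoint_Icc_image_mul_iff hq hk _ l).2 (Or.inr (by omega))⟩

-- Removing the joints `j * (r - 1)`, `l < j ≤ l + k`, leaves the first `l` and the last `n` edges,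
-- and the `(k + 1) * (r - 2)` core vertices of the `k + 1` edges in between become isolated.
lemma matchPoly_pathHypergraph_id_removeVerts_joints (hr : 2 ≤ r) {l k n : ℕ} (hk : 1 ≤ k)
    (x : ℝ) :
    ((pathHypergraph r (l + k + n + 1) id).removeVerts
        ((Finset.Icc (l + 1) (l + k)).image (· * (r - 1)))).matchPoly r x
      = x ^ ((k + 1) * (r - 2))
        * ((pathHypergraph r l id).matchPoly r x * (pathHypergraph r n id).matchPoly r x) := by
  have hq : 0 < r - 1 := by omega
  set I := Finset.Ioo (l * (r - 1)) ((l + k + 1) * (r - 1))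
    \ (Finset.Icc (l + 1) (l + k)).image (· * (r - 1))
  have hI : I.card = (k + 1) * (r - 2) := by
    rw [card_Ioo_sdiff_image_mul_Icc hq, show r - 1 - 1 = r - 2 by omega]
  have hlt : l * (r - 1) < (l + k + 1) * (r - 1) := Nat.mul_lt_mul_of_pos_right (by omega) hq
  have hinj : Set.InjOn (· + (l + k + 1) * (r - 1)) (Set.Iic (n * (r - 1))) :=
    (add_left_injective _).injOn
  have hlV : Disjoint (pathHypergraph r l id).verts I := by
    rw [pathHypergraph_id_verts, Finset.disjoint_left]
    intro z hz hz'
    simp only [Finset.mem_Icc, I, Finset.mem_sdiff, Finset.mem_Ioo] at hz hz'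
    omega
  rw [matchPoly_eq_mul_of_disjoint (A := ⟨(pathHypergraph r l id).verts ∪ I,
      (pathHypergraph r l id).edges⟩) (B := pathHypergraph r n (· + (l + k + 1) * (r - 1)))
      (by omega) (fun e he => (pathHypergraph_wellFormed r l id e he).trans
        Finset.subset_union_left)
      (pathHypergraph_wellFormed _ _ _) (pathHypergraph_uniform (by omega) (Set.injOn_id _))
      (pathHypergraph_uniform (by omega) hinj) ?_ ?_ ?_,
    matchPoly_add_isolated (I := I) (T := ⟨(pathHypergraph r l id).verts ∪ I,
      (pathHypergraph r l id).edges⟩) (by omega) (pathHypergraph_wellFormed r l id)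
      (pathHypergraph_uniform (by omega) (Set.injOn_id _)) hlV (by ext; simp) rfl,
    matchPoly_pathHypergraph hinj, hI, mul_assoc]
  · rw [Finset.disjoint_left]
    intro z hz hz'
    simp only [Finset.mem_union, pathHypergraph_id_verts, Finset.mem_Icc, I, Finset.mem_sdiff,
      Finset.mem_Ioo] at hz
    rw [mem_pathHypergraph_add_verts_iff] at hz'
    omega
  · ext z
    simp only [Finset.mem_union]
    exact mem_removeVerts_joints_verts_iff hr hk
  · ext e
    simp only [Finset.mem_union]
    exact mem_removeVerts_joints_edges_iff hr hk

lemma matchPoly_pathHypergraph_removeVerts_joints (hr : 2 ≤ r) {l k n m : ℕ} (hk : 1 ≤ k)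
    (hm : l + k + n + 1 = m) {w : ℕ → α} (hw : Set.InjOn w (Set.Iic (m * (r - 1)))) (x : ℝ) :
    ((pathHypergraph r m w).removeVerts
        ((Finset.Icc (l + 1) (l + k)).image fun j => w (j * (r - 1)))).matchPoly r x
      = x ^ ((k + 1) * (r - 2))
        * ((pathHypergraph r l id).matchPoly r x * (pathHypergraph r n id).matchPoly r x) := by
  subst hm
  have hJ : ((Finset.Icc (l + 1) (l + k)).image fun j => w (j * (r - 1)))
      = ((Finset.Icc (l + 1) (l + k)).image (· * (r - 1))).image w := by
    rw [Finset.image_image]; rfl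
  have hJV : (Finset.Icc (l + 1) (l + k)).image (· * (r - 1))
      ⊆ (pathHypergraph r (l + k + n + 1) id).verts := by
    intro z hz
    obtain ⟨j, hj, rfl⟩ := Finset.mem_image.1 hz
    rw [pathHypergraph_id_verts, Finset.mem_Icc]
    exact ⟨Nat.zero_le _, Nat.mul_le_mul_right _ (by simp at hj; omega)⟩
  have hwV := hw.mono (coe_pathHypergraph_id_verts_subset r (l + k + n + 1))
  rw [hJ, pathHypergraph_eq_map, map_removeVerts (pathHypergraph_wellFormed _ _ _) hwV hJV,
    matchPoly_map (removeVerts_wellFormed (pathHypergraph_wellFormed _ _ _) _)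
      (hwV.mono (Finset.coe_subset.2 (removeVerts_verts_subset _ _))),
    matchPoly_pathHypergraph_id_removeVerts_joints hr hk]

lemma matchPoly_pathHypergraph_removeVerts_joint (hr : 2 ≤ r) {l n m : ℕ}
    (hm : l + n + 2 = m) {w : ℕ → α} (hw : Set.InjOn w (Set.Iic (m * (r - 1)))) (x : ℝ) :
    ((pathHypergraph r m w).removeVerts {w ((l + 1) * (r - 1))}).matchPoly r x
      = x ^ (2 * (r - 2))
        * ((pathHypergraph r l id).matchPoly r x * (pathHypergraph r n id).matchPoly r x) := by
  have hS : ({w ((l + 1) * (r - 1))} : Finset α)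
      = (Finset.Icc (l + 1) (l + 1)).image fun j => w (j * (r - 1)) := by simp
  rw [hS, matchPoly_pathHypergraph_removeVerts_joints (n := n) hr le_rfl (by omega) hw]

lemma matchPoly_pathHypergraph_removeVerts_adjacent_joints (hr : 2 ≤ r) {l n m : ℕ}
    (hm : l + n + 3 = m) {w : ℕ → α} (hw : Set.InjOn w (Set.Iic (m * (r - 1)))) (x : ℝ) :
    ((pathHypergraph r m w).removeVerts
        {w ((l + 1) * (r - 1)), w ((l + 1 + 1) * (r - 1))}).matchPoly r x
      = x ^ (3 * (r - 2))
        * ((pathHypergraph r l id).matchPoly r x * (pathHypergraph r n id).matchPoly r x) := by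
  have hS : ({w ((l + 1) * (r - 1)), w ((l + 1 + 1) * (r - 1))} : Finset α)
      = (Finset.Icc (l + 1) (l + 2)).image fun j => w (j * (r - 1)) := by
    rw [show Finset.Icc (l + 1) (l + 2) = {l + 1, l + 1 + 1} by ext; simp; omega]
    simp
  rw [hS, matchPoly_pathHypergraph_removeVerts_joints (n := n) hr (by norm_num) (by omega) hw]

end joints

end FinHypergraph

/-- For `r ≥ 3`, `d ≥ 3`, `m ≥ d + 2`, `a = m − d − 1` and
`b = ⌈d/2⌉`, the supertree `T''` obtained from the loose path `P_d^r` by attaching `a`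
pendant edges at the joint vertex `v_b` and one pendant edge at the joint vertex
`v_{b+1}` satisfies
`φ(T'', x) = x^((a+1)(r−1))·φ(P_d^r, x)
  − x^((a+2)(r−1)−2)·φ(P_{b−1}^r, x)·φ(P_{d−b−1}^r, x)
  − a·x^((a+1)(r−1)−2)·φ(P_{b−2}^r, x)·φ(P_{d−b+1}^r, x)`. -/
theorem matchPoly_doublestar_on_path {α : Type*} (r d m : ℕ)
    (hr : 3 ≤ r) (hd : 3 ≤ d) (hm : d + 2 ≤ m)
    (w : ℕ → α) (hw : Set.InjOn w (Set.Iic (d * (r - 1))))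
    (T1 T'' : FinHypergraph α)
    (hT1 : IsPendantEdgesAttach r (m - d - 1) (pathHypergraph r d w)
      (w (((d + 1) / 2 - 1) * (r - 1))) T1)
    (hT'' : IsPendantEdgesAttach r 1 T1 (w (((d + 1) / 2) * (r - 1))) T'')
    (Q1 Q2 Q3 Q4 : FinHypergraph α)
    (hQ1 : IsLoosePath r ((d + 1) / 2 - 1) Q1)
    (hQ2 : IsLoosePath r (d - (d + 1) / 2 - 1) Q2)
    (hQ3 : IsLoosePath r ((d + 1) / 2 - 2) Q3)
    (hQ4 : IsLoosePath r (d - (d + 1) / 2 + 1) Q4) :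
    ∀ x : ℝ, T''.matchPoly r x
      = x ^ ((m - d) * (r - 1)) * (pathHypergraph r d w).matchPoly r x
        - x ^ ((m - d + 1) * (r - 1) - 2) * Q1.matchPoly r x * Q2.matchPoly r x
        - ((m - d - 1 : ℕ) : ℝ) * x ^ ((m - d) * (r - 1) - 2) *
            Q3.matchPoly r x * Q4.matchPoly r x := by
  intro x
  have hr2 : 2 ≤ r := by omega
  obtain ⟨l, hl⟩ : ∃ l, (d + 1) / 2 = l + 1 + 1 := ⟨(d + 1) / 2 - 2, by omega⟩
  obtain ⟨n, hn⟩ : ∃ n, l + n + 3 = d := ⟨d - l - 3, by omega⟩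
  obtain ⟨a, ha⟩ : ∃ a, m - d - 1 = a + 1 := ⟨m - d - 2, by omega⟩
  rw [hl] at hT1 hT'' hQ1 hQ2 hQ3 hQ4
  rw [Nat.add_sub_cancel, ha] at hT1
  rw [Nat.add_sub_cancel] at hQ1
  rw [show d - (l + 1 + 1) - 1 = n by omega] at hQ2
  rw [show l + 1 + 1 - 2 = l by omega] at hQ3
  rw [show d - (l + 1 + 1) + 1 = n + 2 by omega] at hQ4
  rw [matchPoly_eq_of_pendants_at_two_vertices hr2 (pathHypergraph_wellFormed r d w)
      (pathHypergraph_uniform (by omega) hw) (pathHypergraph_joint_mem (by omega) w)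
      (pathHypergraph_joint_ne hr2 hw (by omega) (by omega) (by omega)) hT1 hT'' x,
    matchPoly_pathHypergraph_removeVerts_joint hr2 (show l + (n + 1) + 2 = d by omega) hw,
    matchPoly_pathHypergraph_removeVerts_joint hr2 (show l + 1 + n + 2 = d by omega) hw,
    matchPoly_pathHypergraph_removeVerts_adjacent_joints hr2 hn hw,
    hQ1.matchPoly_eq, hQ2.matchPoly_eq, hQ3.matchPoly_eq, hQ4.matchPoly_eq,
    matchPoly_pathHypergraph_add_two hr2]
  -- remove the truncated subtractions from the exponents
  obtain ⟨p, rfl⟩ : ∃ p, r = p + 3 := ⟨r - 3, by omega⟩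
  have e₁ : (a + 3) * (p + 2) - 2 = a * (p + 2) + (3 * p + 4) := by ring_nf; omega
  have e₂ : (a + 2) * (p + 2) - 2 = a * (p + 2) + (2 * p + 2) := by ring_nf; omega
  rw [ha, show m - d + 1 = a + 3 by omega, show m - d = a + 2 by omega,
    show p + 3 - 1 = p + 2 by omega, show p + 3 - 2 = p + 1 by omega, e₁, e₂,
    Nat.add_sub_cancel]
  push_cast
  ring
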